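/- Conditional monotony (Theorem 4): if an OrchNet family satisfies Assumption A — distinct maximal configurations always return distinct value sets, i.e., for all ω and distinct maximal configurations κ, κ', V_ω(κ) ≠ V_ω(κ') — then the pre-OrchNet is conditionally monotonic: for N ≥ N' and any ω with V_ω(N) = V_ω(N'), the actually occurring configurations coincide, and E_ω(N) ≥ E_ω(N'). -/

import Mathlib

open scoped ENNReal Classical

/-- A Petri net: sets of places and transitions with flow given by pre/post sets,
    and initial marking `M0`. -/
structure PetriNet where
  P : Type
  T : Type
  pre : T → Set P
  post : T → Set P
  M0 : Set P

namespace PetriNet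

variable (N : PetriNet)

/-- Nodes of a net: places or transitions. -/
abbrev Node := N.P ⊕ N.T

/-- One-step flow relation. -/
def prec : N.Node → N.Node → Prop
  | Sum.inl p, Sum.inr t => p ∈ N.pre t
  | Sum.inr t, Sum.inl p => p ∈ N.post t
  | _, _ => False

/-- Causality (reflexive): reflexive-transitive closure of the flow relation. -/
def causLe : N.Node → N.Node → Prop := Relation.ReflTransGen N.prec

/-- Strict causality. -/
def causLt : N.Node → N.Node → Prop := Relation.TransGen N.prec

/-- Conflict: `x # y` iff distinct transitions below `x` and `y` share a preset place. -/
def Conflict (x y : N.Node) : Prop :=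
  ∃ t t' : N.T, t ≠ t' ∧ N.causLe (Sum.inr t) x ∧ N.causLe (Sum.inr t') y ∧
    (N.pre t ∩ N.pre t').Nonempty

/-- Concurrency. -/
def Concurrent (x y : N.Node) : Prop :=
  ¬ N.causLe x y ∧ ¬ N.causLe y x ∧ ¬ N.Conflict x y

/-- A configuration: causally closed and conflict-free set of nodes. -/
def IsConfiguration (κ : Set N.Node) : Prop :=
  (∀ x y : N.Node, N.causLe x y → y ∈ κ → x ∈ κ) ∧
  (∀ x ∈ κ, ∀ y ∈ κ, ¬ N.Conflict x y)

/-- Maximal configuration. -/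
def IsMaxConfiguration (κ : Set N.Node) : Prop :=
  N.IsConfiguration κ ∧ ∀ κ', N.IsConfiguration κ' → κ ⊆ κ' → κ' = κ

/-- A minimal place: no transition produces it. -/
def Minimal (p : N.P) : Prop := ∀ t : N.T, p ∉ N.post t

/-- Occurrence net: no self-conflict, causality a partial order with finite pasts,
    each place produced by at most one transition, `M0` the minimal places. -/
def IsOccurrenceNet : Prop :=
  (∀ x : N.Node, ¬ N.Conflict x x) ∧
  (∀ x y : N.Node, N.causLe x y → N.causLe y x → x = y) ∧
  (∀ t : N.T, {x : N.Node | N.causLe x (Sum.inr t)}.Finite) ∧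
  (∀ p : N.P, {t : N.T | p ∈ N.post t}.Subsingleton) ∧
  (N.M0 = {p : N.P | N.Minimal p})

/-! ### Timed semantics (dates, race policy) -/

/-- One step of the dating operator: a place gets the date of its producing transition
    (or its initial date if minimal), a transition is dated `max` of its preset dates
    plus its latency. -/
noncomputable def dateF (τ : N.T → ℝ≥0∞) (init : N.P → ℝ≥0∞)
    (f : N.Node → ℝ≥0∞) : N.Node → ℝ≥0∞
  | Sum.inl p => if N.Minimal p then init p else ⨆ t ∈ {t : N.T | p ∈ N.post t}, f (Sum.inr t)
  | Sum.inr t => (⨆ p ∈ N.pre t, f (Sum.inl p)) + τ t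

/-- The date of each node (least fixed point of `dateF`; on finite acyclic nets this is
    the usual recursive definition of dates). -/
noncomputable def date (τ : N.T → ℝ≥0∞) (init : N.P → ℝ≥0∞) : N.Node → ℝ≥0∞ :=
  ⨆ k, (N.dateF τ init)^[k] ⊥

/-- Execution time (latency) of a set of nodes: max of the dates of its nodes. -/
noncomputable def execTime (τ : N.T → ℝ≥0∞) (init : N.P → ℝ≥0∞) (κ : Set N.Node) : ℝ≥0∞ :=
  ⨆ x ∈ κ, N.date τ init x

/-- Transition `t` can extend configuration `κ`: it is enabled (preset in `κ`),
    not yet fired, and firing it keeps a configuration (no conflict with `κ`). -/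
def Extends (κ : Set N.Node) (t : N.T) : Prop :=
  Sum.inr t ∉ κ ∧ (∀ p ∈ N.pre t, Sum.inl p ∈ κ) ∧
  N.IsConfiguration (κ ∪ {Sum.inr t} ∪ Sum.inl '' N.post t)

/-- One step of the race policy: among the enabled transitions, one with minimal
    date fires (preempting its conflicting rivals). -/
def RaceStep (τ : N.T → ℝ≥0∞) (init : N.P → ℝ≥0∞) (κ κ' : Set N.Node) : Prop :=
  ∃ t : N.T, N.Extends κ t ∧
    (∀ t' : N.T, N.Extends κ t' → N.date τ init (Sum.inr t) ≤ N.date τ init (Sum.inr t')) ∧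
    κ' = κ ∪ {Sum.inr t} ∪ Sum.inl '' N.post t

/-- The initial configuration: the minimal places. -/
def initConf : Set N.Node := Sum.inl '' {p : N.P | N.Minimal p}

/-- `κ` is an actually occurring configuration under the race policy. -/
def Occurs (τ : N.T → ℝ≥0∞) (init : N.P → ℝ≥0∞) (κ : Set N.Node) : Prop :=
  Relation.ReflTransGen (N.RaceStep τ init) N.initConf κ ∧ ∀ t : N.T, ¬ N.Extends κ t

/-! ### Clusters -/

/-- Closure conditions for clusters: `t ∈ c → •t ⊆ c` and `p ∈ c → p• ⊆ c`. -/
def ClusterClosed (c : Set N.Node) : Prop :=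
  (∀ t : N.T, Sum.inr t ∈ c → ∀ p ∈ N.pre t, Sum.inl p ∈ c) ∧
  (∀ p : N.P, Sum.inl p ∈ c → ∀ t : N.T, p ∈ N.pre t → Sum.inr t ∈ c)

/-- A cluster: a minimal nonempty set of nodes satisfying the closure conditions. -/
def IsCluster (c : Set N.Node) : Prop :=
  c.Nonempty ∧ N.ClusterClosed c ∧
  ∀ c' : Set N.Node, c'.Nonempty → N.ClusterClosed c' → c' ⊆ c → c' = c

/-! ### Marking semantics, workflow nets -/

/-- Firing a transition in the (1-safe, set-based) marking semantics. -/
def Fires (M : Set N.P) (t : N.T) (M' : Set N.P) : Prop :=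
  N.pre t ⊆ M ∧ M' = (M \ N.pre t) ∪ N.post t

/-- Reachability between markings. -/
def Reach : Set N.P → Set N.P → Prop :=
  Relation.ReflTransGen (fun M M' => ∃ t : N.T, N.Fires M t M')

end PetriNet

open PetriNet

/-- Workflow net with source place `i` and sink place `o`. -/
def IsWorkflow (N : PetriNet) (i o : N.P) : Prop :=
  (∀ p : N.P, (∀ t : N.T, p ∉ N.post t) ↔ p = i) ∧
  (∀ p : N.P, (∀ t : N.T, p ∉ N.pre t) ↔ p = o) ∧
  N.M0 = {i}

/-- Soundness of a workflow net. -/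
def IsSound (N : PetriNet) (i o : N.P) : Prop :=
  (∀ M, N.Reach {i} M → N.Reach M {o}) ∧
  (∀ M, N.Reach {i} M → o ∈ M → M = {o}) ∧
  (∀ t : N.T, ∃ M, N.Reach {i} M ∧ N.pre t ⊆ M)

/-- 1-safety in the set-based semantics: a fired transition never re-marks a
    still-marked place. -/
def IsSafe (N : PetriNet) (i : N.P) : Prop :=
  ∀ M t M', N.Reach {i} M → N.Fires M t M' → (M \ N.pre t) ∩ N.post t = ∅

/-- Loop-freeness: the flow relation is acyclic. -/
def LoopFree (N : PetriNet) : Prop := ∀ x : N.Node, ¬ N.causLt x x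

/-- Net morphism: maps places to places and transitions to transitions, restricting
    to bijections on presets and postsets of transitions. -/
structure NetMorphism (U W : PetriNet) where
  fP : U.P → W.P
  fT : U.T → W.T
  pre_bij : ∀ t : U.T, Set.BijOn fP (U.pre t) (W.pre (fT t))
  post_bij : ∀ t : U.T, Set.BijOn fP (U.post t) (W.post (fT t))

/-- The induced map on nodes. -/
def NetMorphism.node {U W : PetriNet} (φ : NetMorphism U W) : U.Node → W.Node :=
  Sum.map φ.fP φ.fT

/-- `(U, φ)` is (a) branching-process unfolding of `W`: `U` is an occurrence net,
    `φ` a morphism mapping the minimal places of `U` bijectively onto those of `W`,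
    and every co-set of `U` matching the preset of a transition of `W` is the preset
    of exactly one transition of `U` above it. -/
def IsUnfolding (U W : PetriNet) (φ : NetMorphism U W) : Prop :=
  U.IsOccurrenceNet ∧
  Set.BijOn φ.fP {p : U.P | U.Minimal p} {p : W.P | ∀ t : W.T, p ∉ W.post t} ∧
  (∀ (X : Set U.P) (u : W.T),
    (∀ p ∈ X, ∀ q ∈ X, p = q ∨ U.Concurrent (Sum.inl p) (Sum.inl q)) →
    Set.BijOn φ.fP X (W.pre u) →
    ∃! t : U.T, U.pre t = X ∧ φ.fT t = u)

/-- The set of values returned by a configuration `κ`: the values `φ t` of its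
    maximal transitions. -/
def PetriNet.retValues (N : PetriNet) {V : Type} (φ : N.T → V) (κ : Set N.Node) : Set V :=
  {v : V | ∃ t : N.T, Sum.inr t ∈ κ ∧
    (∀ t' : N.T, Sum.inr t' ∈ κ → ¬ N.causLt (Sum.inr t) (Sum.inr t')) ∧ v = φ t}

/-!
An occurring configuration admits no further race step. In an occurrence net causality is
well-founded, so a configuration `κ` strictly inside a configuration `κ''` can always be extended:
a causally minimal node of `κ'' \ κ` is a transition whose preset lies in `κ`. Hence occurring
configurations are maximal, and Assumption A identifies the two occurring configurations from
their common value set. On a fixed configuration the execution time is monotone in latencies and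
initial dates, because dates are the iterates from `⊥` of a monotone dating operator.
-/

namespace PetriNet

variable {N : PetriNet}

theorem Conflict.symm {x y : N.Node} (h : N.Conflict x y) : N.Conflict y x := by
  obtain ⟨t, t', hne, hx, hy, hint⟩ := h
  exact ⟨t', t, hne.symm, hy, hx, by rwa [Set.inter_comm]⟩

theorem causLe_inl_cases {x : N.Node} {p : N.P} (h : N.causLe x (Sum.inl p)) :
    x = Sum.inl p ∨ ∃ t : N.T, p ∈ N.post t ∧ N.causLe x (Sum.inr t) := by
  rcases h.cases_tail with h | ⟨_ | t, hc, hstep⟩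
  · exact Or.inl h.symm
  · exact hstep.elim
  · exact Or.inr ⟨t, hstep, hc⟩

theorem causLe_inr_cases {x : N.Node} {t : N.T} (h : N.causLe x (Sum.inr t)) :
    x = Sum.inr t ∨ ∃ p : N.P, p ∈ N.pre t ∧ N.causLe x (Sum.inl p) := by
  rcases h.cases_tail with h | ⟨q | _, hc, hstep⟩
  · exact Or.inl h.symm
  · exact Or.inr ⟨q, hstep, hc⟩
  · exact hstep.elim

theorem eq_of_causLe_of_minimal {x : N.Node} {p : N.P} (hp : N.Minimal p)
    (h : N.causLe x (Sum.inl p)) : x = Sum.inl p :=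
  (causLe_inl_cases h).resolve_right fun ⟨t, ht, _⟩ => hp t ht

theorem causLe_producer_of_causLe_post (hN : N.IsOccurrenceNet) {x : N.Node} {p : N.P}
    {u : N.T} (hpu : p ∈ N.post u) (h : N.causLe x (Sum.inl p)) :
    x = Sum.inl p ∨ N.causLe x (Sum.inr u) := by
  rcases causLe_inl_cases h with h | ⟨t, ht, hle⟩
  · exact Or.inl h
  · rw [hN.2.2.2.1 p ht hpu] at hle
    exact Or.inr hle

theorem Conflict.of_post (hN : N.IsOccurrenceNet) {x : N.Node} {p : N.P} {u : N.T}
    (hpu : p ∈ N.post u) (h : N.Conflict x (Sum.inl p)) : N.Conflict x (Sum.inr u) := by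
  obtain ⟨t, t', hne, hx, hy, hint⟩ := h
  rcases causLe_producer_of_causLe_post hN hpu hy with h | h
  · cases h
  · exact ⟨t, t', hne, hx, h, hint⟩

theorem not_causLt_self (hN : N.IsOccurrenceNet) (x : N.Node) : ¬ N.causLt x x := by
  intro hx
  obtain ⟨b, hxb, hbx⟩ := Relation.TransGen.head'_iff.1 hx
  obtain rfl : x = b := hN.2.1 x b (.single hxb) hbx
  rcases x with _ | _ <;> exact hxb

theorem finite_setOf_causLe (hN : N.IsOccurrenceNet) (x : N.Node) :
    {y | N.causLe y x}.Finite := by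
  rcases x with p | t
  · refine ((Set.finite_singleton (Sum.inl p)).union
      ((hN.2.2.2.1 p).finite.biUnion fun t _ => hN.2.2.1 t)).subset fun y hy => ?_
    rcases causLe_inl_cases hy with rfl | ⟨t, ht, hle⟩
    · exact Or.inl rfl
    · exact Or.inr (Set.mem_biUnion ht hle)
  · exact hN.2.2.1 t

/-- The size of the (finite) past strictly decreases along causality. -/
theorem wellFounded_causLt (hN : N.IsOccurrenceNet) : WellFounded N.causLt := by
  refine Subrelation.wf (fun {y x} hyx => ?_) (measure fun x => {y | N.causLe y x}.ncard).wf
  refine Set.ncard_lt_ncard ⟨fun z hz => hz.trans hyx.to_reflTransGen, fun hsub => ?_⟩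
    (finite_setOf_causLe hN x)
  obtain rfl : y = x := hN.2.1 y x hyx.to_reflTransGen (hsub Relation.ReflTransGen.refl)
  exact not_causLt_self hN y hyx

theorem isConfiguration_initConf : N.IsConfiguration N.initConf := by
  constructor
  · rintro x y hxy ⟨p, hp, rfl⟩
    exact ⟨p, hp, (eq_of_causLe_of_minimal hp hxy).symm⟩
  · rintro x ⟨p, hp, rfl⟩ y - ⟨t, t', -, hx, -, -⟩
    cases eq_of_causLe_of_minimal hp hx

section RaceReachable

variable {τ : N.T → ℝ≥0∞} {init : N.P → ℝ≥0∞} {κ : Set N.Node}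

theorem isConfiguration_of_raceReach
    (h : Relation.ReflTransGen (N.RaceStep τ init) N.initConf κ) : N.IsConfiguration κ := by
  rcases h.cases_tail with rfl | ⟨_, -, t, hext, -, rfl⟩
  · exact isConfiguration_initConf
  · exact hext.2.2

theorem initConf_subset_of_raceReach
    (h : Relation.ReflTransGen (N.RaceStep τ init) N.initConf κ) : N.initConf ⊆ κ := by
  induction h with
  | refl => rfl
  | tail _ hstep ih =>
    obtain ⟨t, -, -, rfl⟩ := hstep
    exact ih.trans (Set.subset_union_left.trans Set.subset_union_left)

theorem post_mem_of_raceReach (h : Relation.ReflTransGen (N.RaceStep τ init) N.initConf κ)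
    {t : N.T} (ht : Sum.inr t ∈ κ) {p : N.P} (hp : p ∈ N.post t) :
    Sum.inl p ∈ κ := by
  induction h with
  | refl => obtain ⟨q, -, hq⟩ := ht; cases hq
  | tail _ hstep ih =>
    obtain ⟨u, -, -, rfl⟩ := hstep
    rcases ht with (ht | ht) | ⟨q, -, hq⟩
    · exact Or.inl (Or.inl (ih ht))
    · obtain rfl : t = u := Sum.inr_injective ht
      exact Or.inr ⟨p, hp, rfl⟩
    · cases hq

end RaceReachable

theorem isConfiguration_fire (hN : N.IsOccurrenceNet) {κ κ'' : Set N.Node} {u : N.T}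
    (hκ : N.IsConfiguration κ) (hκ'' : N.IsConfiguration κ'') (hsub : κ ⊆ κ'')
    (hu : Sum.inr u ∈ κ'') (hpre : ∀ p ∈ N.pre u, Sum.inl p ∈ κ) :
    N.IsConfiguration (κ ∪ {Sum.inr u} ∪ Sum.inl '' N.post u) := by
  have below_u : ∀ x, N.causLe x (Sum.inr u) → x ∈ κ ∪ {Sum.inr u} := by
    intro x hx
    rcases causLe_inr_cases hx with rfl | ⟨p, hp, hle⟩
    · exact Or.inr rfl
    · exact Or.inl (hκ.1 _ _ hle (hpre p hp))
  -- a conflict with an output place of `u` is a conflict with `u` itself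
  have conflict_in_κ'' : ∀ z ∈ κ ∪ {Sum.inr u} ∪ Sum.inl '' N.post u,
      ∃ z' ∈ κ'', ∀ x, N.Conflict x z → N.Conflict x z' := by
    rintro z ((hz | rfl) | ⟨p, hp, rfl⟩)
    · exact ⟨z, hsub hz, fun _ => id⟩
    · exact ⟨_, hu, fun _ => id⟩
    · exact ⟨_, hu, fun _ => Conflict.of_post hN hp⟩
  constructor
  · rintro x y hxy ((hy | rfl) | ⟨p, hp, rfl⟩)
    · exact Or.inl (Or.inl (hκ.1 _ _ hxy hy))
    · exact Or.inl (below_u x hxy)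
    · rcases causLe_producer_of_causLe_post hN hp hxy with rfl | hle
      · exact Or.inr ⟨p, hp, rfl⟩
      · exact Or.inl (below_u x hle)
  · intro x hx y hy hxy
    obtain ⟨y', hy', hy'c⟩ := conflict_in_κ'' y hy
    obtain ⟨x', hx', hx'c⟩ := conflict_in_κ'' x hx
    exact hκ''.2 _ hy' _ hx' (hx'c _ (hy'c x hxy).symm)

/-- A causally minimal node of `κ'' \ κ` must be a transition whose preset lies in `κ`. -/
theorem exists_extends_of_ssubset (hN : N.IsOccurrenceNet) {τ : N.T → ℝ≥0∞}
    {init : N.P → ℝ≥0∞} {κ κ'' : Set N.Node}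
    (h : Relation.ReflTransGen (N.RaceStep τ init) N.initConf κ)
    (hκ'' : N.IsConfiguration κ'') (hsub : κ ⊂ κ'') : ∃ u, N.Extends κ u := by
  obtain ⟨x, ⟨hxκ'', hxκ⟩, hmin⟩ :=
    (wellFounded_causLt hN).has_min {x | x ∈ κ'' ∧ x ∉ κ} (Set.exists_of_ssubset hsub)
  have below_x : ∀ y, N.causLt y x → y ∈ κ := fun y hyx => by_contra fun hyκ =>
    hmin y ⟨hκ''.1 _ _ hyx.to_reflTransGen hxκ'', hyκ⟩ hyx
  rcases x with p | u
  · by_cases hp : N.Minimal p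
    · exact (hxκ (initConf_subset_of_raceReach h ⟨p, hp, rfl⟩)).elim
    · obtain ⟨t, ht⟩ := not_forall_not.1 hp
      exact (hxκ (post_mem_of_raceReach h (below_x _ (.single ht)) ht)).elim
  · have hpre : ∀ p ∈ N.pre u, Sum.inl p ∈ κ := fun p hp => below_x _ (.single hp)
    exact ⟨u, hxκ, hpre, isConfiguration_fire hN (isConfiguration_of_raceReach h) hκ''
      hsub.subset hxκ'' hpre⟩

theorem isMaxConfiguration_of_occurs (hN : N.IsOccurrenceNet) {τ : N.T → ℝ≥0∞}
    {init : N.P → ℝ≥0∞} {κ : Set N.Node} (h : N.Occurs τ init κ) :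
    N.IsMaxConfiguration κ := by
  refine ⟨isConfiguration_of_raceReach h.1, fun κ'' hκ'' hsub => ?_⟩
  by_contra hne
  obtain ⟨u, hu⟩ := exists_extends_of_ssubset hN h.1 hκ'' (hsub.ssubset_of_ne (Ne.symm hne))
  exact h.2 u hu

theorem dateF_mono {τ τ' : N.T → ℝ≥0∞} {init init' : N.P → ℝ≥0∞} (hτ : τ' ≤ τ)
    (hinit : init' ≤ init) {f g : N.Node → ℝ≥0∞} (hfg : f ≤ g) :
    N.dateF τ' init' f ≤ N.dateF τ init g := by
  rintro (p | t)
  · simp only [dateF]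
    split_ifs
    · exact hinit p
    · exact iSup₂_mono fun t _ => hfg _
  · exact add_le_add (iSup₂_mono fun p _ => hfg _) (hτ t)

theorem date_mono {τ τ' : N.T → ℝ≥0∞} {init init' : N.P → ℝ≥0∞} (hτ : τ' ≤ τ)
    (hinit : init' ≤ init) : N.date τ' init' ≤ N.date τ init :=
  iSup_mono fun k => Monotone.iterate_le_of_le (fun _ _ => dateF_mono le_rfl le_rfl)
    (fun _ => dateF_mono hτ hinit le_rfl) k ⊥

theorem execTime_mono {τ τ' : N.T → ℝ≥0∞} {init init' : N.P → ℝ≥0∞} (hτ : τ' ≤ τ)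
    (hinit : init' ≤ init) (κ : Set N.Node) : N.execTime τ' init' κ ≤ N.execTime τ init κ :=
  iSup₂_mono fun x _ => date_mono hτ hinit x

end PetriNet

theorem stmt16_general (N : PetriNet) (hN : N.IsOccurrenceNet)
    {V : Type} (φ : N.T → V)   -- value functions (for a fixed daemon value ω)
    (hA : ∀ κ κ' : Set N.Node, N.IsMaxConfiguration κ → N.IsMaxConfiguration κ' →
      κ ≠ κ' → N.retValues φ κ ≠ N.retValues φ κ')
    (τ τ' : N.T → ℝ≥0∞) (init init' : N.P → ℝ≥0∞)
    (hτ : ∀ t, τ' t ≤ τ t) (hinit : ∀ p, init' p ≤ init p)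
    (κ κ' : Set N.Node)
    (hκ : N.Occurs τ init κ) (hκ' : N.Occurs τ' init' κ')
    (hval : N.retValues φ κ = N.retValues φ κ') :
    κ = κ' ∧ N.execTime τ' init' κ' ≤ N.execTime τ init κ := by
  obtain rfl : κ = κ' := by_contra fun hne =>
    hA κ κ' (isMaxConfiguration_of_occurs hN hκ) (isMaxConfiguration_of_occurs hN hκ') hne hval
  exact ⟨rfl, execTime_mono hτ hinit κ⟩

/-- Theorem 4, conditional monotony: under Assumption A (distinct
    maximal configurations return distinct value sets), if `N ≥ N'` (pointwise
    larger latencies and initial dates) and for daemon value `ω` the returned value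
    sets coincide, then the actually occurring configurations coincide and
    `E_ω(N) ≥ E_ω(N')`. -/
theorem stmt16 (N : PetriNet) [Fintype N.P] [Fintype N.T] (hN : N.IsOccurrenceNet)
    {V : Type} (φ : N.T → V)   -- value functions (for a fixed daemon value ω)
    (hA : ∀ κ κ' : Set N.Node, N.IsMaxConfiguration κ → N.IsMaxConfiguration κ' →
      κ ≠ κ' → N.retValues φ κ ≠ N.retValues φ κ')
    (τ τ' : N.T → ℝ≥0∞) (init init' : N.P → ℝ≥0∞)
    (hτ : ∀ t, τ' t ≤ τ t) (hinit : ∀ p, init' p ≤ init p)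
    (κ κ' : Set N.Node)
    (hκ : N.Occurs τ init κ) (hκ' : N.Occurs τ' init' κ')
    (hval : N.retValues φ κ = N.retValues φ κ') :
    κ = κ' ∧ N.execTime τ' init' κ' ≤ N.execTime τ init κ :=
  stmt16_general N hN φ hA τ τ' init init' hτ hinit κ κ' hκ hκ' hval
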